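/- arXiv:1703.06487 — 3 statements merged into one kernel-verified Lean document; each statement's English description precedes it below -/
import Mathlib

section
/- Let P be a δ-power protected ε-sample in ℝⁿ (meaning every Delaunay circumball B(c,r) of a Delaunay n-simplex satisfies: no point of P outside the simplex lies in B(c, √(r² + δ²)), and all Delaunay circumradii are at most ε). Then any two adjacent Voronoi vertices c, c' of the Voronoi diagram of P satisfy ‖c − c'‖ ≥ δ²/(4ε). -/
/-- A Delaunay circumball of the point set `P`: the `n+1` points `p i` of `P` are affinely
independent, all lie on the sphere of center `c` and radius `r`, and no point of `P` lies
inside the open ball. -/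
def IsDelaunayBall {n : ℕ} (P : Set (EuclideanSpace ℝ (Fin n)))
    (p : Fin (n + 1) → EuclideanSpace ℝ (Fin n)) (c : EuclideanSpace ℝ (Fin n)) (r : ℝ) :
    Prop :=
  (∀ i, p i ∈ P) ∧ AffineIndependent ℝ p ∧ (∀ i, dist c (p i) = r) ∧ ∀ q ∈ P, r ≤ dist c q

/-- `δ`-power protection: no point of `P` outside a Delaunay simplex lies in the dilated
ball `B(c, √(r² + δ²))`. -/
def PowerProtected {n : ℕ} (P : Set (EuclideanSpace ℝ (Fin n))) (δ : ℝ) : Prop :=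
  ∀ p c r, IsDelaunayBall P p c r →
    ∀ q ∈ P, q ∉ Set.range p → Real.sqrt (r ^ 2 + δ ^ 2) < dist c q

/-!
Let `t` be a common vertex of the two simplices. Since `a` and `t` lie on the sphere around `c`,
the difference of the powers of `a` and `t` with respect to the sphere around `c'` equals
`2⟪c - c', a - t⟫`. Power protection makes this difference exceed `δ²`, while Cauchy–Schwarz
bounds it by `2 ‖c - c'‖ ‖a - t‖ ≤ 4 ε ‖c - c'‖`.
-/

section InnerProductSpace

variable {V : Type*} [NormedAddCommGroup V] [InnerProductSpace ℝ V]

theorem two_mul_inner_sub_sub_eq_dist_sq (c c' a t : V) :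
    2 * inner ℝ (c - c') (a - t) =
      dist c' a ^ 2 - dist c a ^ 2 - dist c' t ^ 2 + dist c t ^ 2 := by
  simp only [dist_eq_norm, norm_sub_sq_real, inner_sub_left, inner_sub_right]
  ring

theorem lt_two_mul_dist_mul_dist_of_dist_eq {c c' a t : V} {s : ℝ}
    (hc : dist c a = dist c t) (hc' : dist c' t ^ 2 + s < dist c' a ^ 2) :
    s < 2 * dist c c' * dist a t :=
  calc s < dist c' a ^ 2 - dist c a ^ 2 - dist c' t ^ 2 + dist c t ^ 2 := by
        rw [hc]; linarith
    _ = 2 * inner ℝ (c - c') (a - t) := (two_mul_inner_sub_sub_eq_dist_sq c c' a t).symm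
    _ ≤ 2 * (‖c - c'‖ * ‖a - t‖) := by gcongr; exact real_inner_le_norm _ _
    _ = 2 * dist c c' * dist a t := by rw [dist_eq_norm, dist_eq_norm, mul_assoc]

end InnerProductSpace

namespace IsDelaunayBall

variable {n : ℕ} {P : Set (EuclideanSpace ℝ (Fin n))} {p : Fin (n + 1) → EuclideanSpace ℝ (Fin n)}
  {c : EuclideanSpace ℝ (Fin n)} {r : ℝ}

theorem dist_center (h : IsDelaunayBall P p c r) (i : Fin (n + 1)) : dist c (p i) = r :=
  h.2.2.1 i

theorem radius_nonneg (h : IsDelaunayBall P p c r) : 0 ≤ r :=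
  h.dist_center 0 ▸ dist_nonneg

end IsDelaunayBall

theorem PowerProtected.sq_add_sq_lt_dist_sq {n : ℕ} {P : Set (EuclideanSpace ℝ (Fin n))}
    {δ : ℝ} (hP : PowerProtected P δ) {p : Fin (n + 1) → EuclideanSpace ℝ (Fin n)}
    {c : EuclideanSpace ℝ (Fin n)} {r : ℝ} (h : IsDelaunayBall P p c r)
    {q : EuclideanSpace ℝ (Fin n)} (hq : q ∈ P) (hqp : q ∉ Set.range p) :
    r ^ 2 + δ ^ 2 < dist c q ^ 2 :=
  Real.lt_sq_of_sqrt_lt (hP p c r h q hq hqp)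

theorem stmt3_general (n : ℕ) (P : Set (EuclideanSpace ℝ (Fin n))) (ε δ : ℝ)
    (hPP : PowerProtected P δ)
    (hradii : ∀ p c r, IsDelaunayBall P p c r → r ≤ ε)
    (τ : Fin n → EuclideanSpace ℝ (Fin n)) (a a' c c' : EuclideanSpace ℝ (Fin n)) (r r' : ℝ)
    (hσ : IsDelaunayBall P (Fin.cons a τ) c r)
    (hσ' : IsDelaunayBall P (Fin.cons a' τ) c' r')
    (ha : a ∉ Set.range (Fin.cons a' τ : Fin (n + 1) → EuclideanSpace ℝ (Fin n))) :
    δ ^ 2 / (4 * ε) ≤ dist c c' := by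
  rcases n with _ | m
  · exact absurd ⟨0, Subsingleton.elim _ _⟩ ha
  have hrε : r ≤ ε := hradii _ _ _ hσ
  have hca : dist c a = r := hσ.dist_center 0
  have hct : dist c (τ 0) = r := hσ.dist_center 1
  have hat : dist a (τ 0) ≤ 2 * ε := by linarith [dist_triangle_left a (τ 0) c]
  have hc't : dist c' (τ 0) = r' := hσ'.dist_center 1
  have hgap : dist c' (τ 0) ^ 2 + δ ^ 2 < dist c' a ^ 2 :=
    hc't ▸ hPP.sq_add_sq_lt_dist_sq hσ' (hσ.1 0) ha
  have hsep : δ ^ 2 < 2 * dist c c' * dist a (τ 0) :=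
    lt_two_mul_dist_mul_dist_of_dist_eq (hca.trans hct.symm) hgap
  refine div_le_of_le_mul₀ (by linarith [hσ.radius_nonneg]) dist_nonneg ?_
  nlinarith [dist_nonneg (x := c) (y := c')]

/-- separation of adjacent Voronoi vertices.  If `P` is a `δ`-power protected
`ε`-sample (all Delaunay circumradii at most `ε`), and `c`, `c'` are the circumcenters of two
adjacent Delaunay simplices `a * τ` and `a' * τ`, then `‖c − c'‖ ≥ δ²/(4ε)`. -/
theorem stmt3 (n : ℕ) (P : Set (EuclideanSpace ℝ (Fin n))) (ε δ : ℝ)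
    (hε : 0 < ε) (hδ : 0 < δ)
    (hPP : PowerProtected P δ)
    (hradii : ∀ p c r, IsDelaunayBall P p c r → r ≤ ε)
    (τ : Fin n → EuclideanSpace ℝ (Fin n)) (a a' c c' : EuclideanSpace ℝ (Fin n)) (r r' : ℝ)
    (hσ : IsDelaunayBall P (Fin.cons a τ) c r)
    (hσ' : IsDelaunayBall P (Fin.cons a' τ) c' r')
    (ha : a ∉ Set.range (Fin.cons a' τ : Fin (n + 1) → EuclideanSpace ℝ (Fin n)))
    (hne : c ≠ c') :
    δ ^ 2 / (4 * ε) ≤ dist c c' :=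
  stmt3_general n P ε δ hPP hradii τ a a' c c' r r' hσ hσ' ha
end

section
/- (Whitney-type angle bound.) Let H be a hyperplane in ℝⁿ and τ an (n−1)-simplex all of whose vertices lie within distance η of H, and whose minimum altitude is h_min > 0. Then the angle ξ between aff(τ) and H satisfies sin ξ ≤ η·n/h_min. -/
/-!
Write a direction vector `w` of `aff(τ)` as `∑ aⱼ τⱼ` with `∑ aⱼ = 0`. For each `i`, the point
`τᵢ - w / aᵢ` is an affine combination of the other vertices, so the altitude at `τᵢ` is at most
`‖w‖ / |aᵢ|`, i.e. `|aᵢ| ≤ 1 / h_min` when `‖w‖ = 1`. Since the weights sum to zero,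
`⟪w, u⟫ = ∑ aⱼ ⟪τⱼ - x₀, u⟫`, and each term is at most `η / h_min`.
-/

theorem abs_mul_infDist_affineSpan_le_norm_weightedVSub {ι V P : Type*} [NormedAddCommGroup V]
    [NormedSpace ℝ V] [MetricSpace P] [NormedAddTorsor V P] {s : Finset ι}
    {a : ι → ℝ} (ha : ∑ j ∈ s, a j = 0) (p : ι → P) {i : ι} (hi : i ∈ s) :
    |a i| * Metric.infDist (p i) (affineSpan ℝ (p '' {j | j ≠ i})) ≤ ‖s.weightedVSub p a‖ := by
  classical
  rcases eq_or_ne (a i) 0 with hai | hai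
  · simp [hai]
  -- `q := s.affineCombination ℝ p b` lies on the opposite facet, and `p i -ᵥ q` is
  -- `(a i)⁻¹ • s.weightedVSub p a`.
  set δ : ι → ℝ := Pi.single i 1
  set b : ι → ℝ := δ - (a i)⁻¹ • a
  have hb : ∑ j ∈ s, b j = 1 := by
    simp [b, δ, Finset.sum_sub_distrib, ← Finset.mul_sum, ha, hi]
  have hq : s.affineCombination ℝ p b ∈ affineSpan ℝ (p '' {j | j ≠ i}) :=
    affineCombination_mem_affineSpan_image hb (fun j _ hj => by
      obtain rfl : j = i := by simpa using hj
      simp [b, δ, hai]) p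
  have hpi : s.affineCombination ℝ p δ = p i :=
    s.affineCombination_of_eq_one_of_eq_zero δ p hi (by simp [δ])
      (fun j _ hj => by simp [δ, hj])
  have hdist : dist (p i) (s.affineCombination ℝ p b) = |a i|⁻¹ * ‖s.weightedVSub p a‖ := by
    rw [dist_eq_norm_vsub V, ← hpi, s.affineCombination_vsub, sub_sub_cancel, map_smul,
      norm_smul, Real.norm_eq_abs, abs_inv]
  calc |a i| * Metric.infDist (p i) (affineSpan ℝ (p '' {j | j ≠ i}))
      ≤ |a i| * dist (p i) (s.affineCombination ℝ p b) := by
        gcongr; exact Metric.infDist_le_dist_of_mem hq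
    _ = ‖s.weightedVSub p a‖ := by
        rw [hdist, mul_inv_cancel_left₀ (abs_ne_zero.mpr hai)]

theorem abs_inner_weightedVSub_le {ι V P : Type*} [NormedAddCommGroup V] [InnerProductSpace ℝ V]
    [MetricSpace P] [NormedAddTorsor V P] {s : Finset ι} {a : ι → ℝ} (ha : ∑ j ∈ s, a j = 0)
    {p : ι → P} {x₀ : P} {u : V} {η : ℝ} (hclose : ∀ j ∈ s, |inner ℝ (p j -ᵥ x₀) u| ≤ η) :
    |inner ℝ (s.weightedVSub p a) u| ≤ η * ∑ j ∈ s, |a j| := by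
  rw [s.weightedVSub_eq_weightedVSubOfPoint_of_sum_eq_zero a p ha x₀,
    Finset.weightedVSubOfPoint_apply, sum_inner, Finset.mul_sum]
  refine (Finset.abs_sum_le_sum_abs _ _).trans (Finset.sum_le_sum fun j hj => ?_)
  rw [real_inner_smul_left, abs_mul, mul_comm η]
  exact mul_le_mul_of_nonneg_left (hclose j hj) (abs_nonneg _)

theorem stmt14_general (n : ℕ) (u x₀ : EuclideanSpace ℝ (Fin n))
    (τ : Fin n → EuclideanSpace ℝ (Fin n))
    (η hmin : ℝ) (hh : 0 < hmin)
    (hclose : ∀ i, |(inner ℝ (τ i - x₀) u : ℝ)| ≤ η)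
    (halt : ∀ i, hmin ≤ Metric.infDist (τ i)
        (affineSpan ℝ (τ '' {j | j ≠ i}) : Set (EuclideanSpace ℝ (Fin n)))) :
    ∀ w ∈ (affineSpan ℝ (Set.range τ)).direction,
      ‖w‖ = 1 → |(inner ℝ w u : ℝ)| ≤ η * n / hmin := by
  intro w hw hw1
  rw [direction_affineSpan] at hw
  obtain ⟨s, a, ha, rfl⟩ := (mem_vectorSpan_iff_eq_weightedVSub ℝ).1 hw
  have hcoef : ∀ j ∈ s, |a j| ≤ 1 / hmin := fun j hj => by
    rw [le_div_iff₀ hh, ← hw1]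
    exact (mul_le_mul_of_nonneg_left (halt j) (abs_nonneg _)).trans
      (abs_mul_infDist_affineSpan_le_norm_weightedVSub ha τ hj)
  obtain ⟨j, -⟩ : s.Nonempty := Finset.nonempty_iff_ne_empty.2 fun hs => by simp [hs] at hw1
  have hη : 0 ≤ η := (abs_nonneg _).trans (hclose j)
  calc |inner ℝ (s.weightedVSub τ a) u|
      ≤ η * ∑ j ∈ s, |a j| := abs_inner_weightedVSub_le ha fun j _ => hclose j
    _ ≤ η * (n * (1 / hmin)) := by
        gcongr
        calc ∑ j ∈ s, |a j| ≤ s.card * (1 / hmin) := by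
              simpa using Finset.sum_le_card_nsmul s _ _ hcoef
          _ ≤ n * (1 / hmin) := by
              gcongr
              simpa using s.card_le_univ
    _ = η * n / hmin := by ring

/-- Whitney-type angle bound: if all vertices of an `(n−1)`-simplex `τ` lie
within distance `η` of the hyperplane `H = {x : ⟪x − x₀, u⟫ = 0}` (with `‖u‖ = 1`), and the
minimum altitude of `τ` is `h_min > 0`, then the angle `ξ` between `aff(τ)` and `H`
satisfies `sin ξ ≤ η·n/h_min`; equivalently, every unit vector `w` in the direction of
`aff(τ)` satisfies `|⟪w, u⟫| ≤ η·n/h_min`. -/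
theorem stmt14 (n : ℕ) (hn : 1 ≤ n) (u x₀ : EuclideanSpace ℝ (Fin n)) (hu : ‖u‖ = 1)
    (τ : Fin n → EuclideanSpace ℝ (Fin n)) (hind : AffineIndependent ℝ τ)
    (η hmin : ℝ) (hη : 0 ≤ η) (hh : 0 < hmin)
    (hclose : ∀ i, |(inner ℝ (τ i - x₀) u : ℝ)| ≤ η)
    (halt : ∀ i, hmin ≤ Metric.infDist (τ i)
        (affineSpan ℝ (τ '' {j | j ≠ i}) : Set (EuclideanSpace ℝ (Fin n)))) :
    ∀ w ∈ (affineSpan ℝ (Set.range τ)).direction,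
      ‖w‖ = 1 → |(inner ℝ w u : ℝ)| ≤ η * n / hmin :=
  stmt14_general n u x₀ τ η hmin hh hclose halt
end

section
/- Let g be a Riemannian metric on a convex open set U ⊆ ℝⁿ whose distance satisfies d_g(x,y) = ‖x−y‖ + δd(x,y) with |δd(x,y)| ≤ (ψ₀−1)‖x−y‖ for all x,y ∈ U, where 1 ≤ ψ₀ ≤ 2. Let p₀,…,p_n ∈ U with pairwise distances and distances to all relevant points at most 4ε, let λ₀,…,λ_n ≥ 0 with Σλ_i = 1, and let x̃ be a minimizer over U of E(x) = Σ_i λ_i·d_g(x,p_i)², while x_e = Σ_i λ_i p_i is the Euclidean barycenter. If ‖x̃ − p_i‖ ≤ 4ε for all i, then ‖x̃ − x_e‖ ≤ √(2·4³·(ψ₀−1))·ε. -/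
/-!
On the `4ε`-balls around the `pᵢ` the hypothesis on `d_g` gives
`|d_g(x, pᵢ)² − ‖x − pᵢ‖²| ≤ 4³(ψ₀ − 1)ε²`, so the Riemannian energy and the Euclidean energy
`Σ λᵢ‖x − pᵢ‖²` differ by at most `α = 4³(ψ₀ − 1)ε²` at both `x̃` and the barycenter `x_e`.
By the parallel axis identity the Euclidean energy exceeds its value at `x_e` by exactly
`‖x − x_e‖²`, and `x̃` minimizes the Riemannian energy, so `‖x̃ − x_e‖² ≤ 2α`.
-/

open Finset

lemma abs_sq_sub_sq_le_of_abs_sub_le {a b c : ℝ} (hb : 0 ≤ b) (h : |a - b| ≤ c * b) :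
    |a ^ 2 - b ^ 2| ≤ c * (c + 2) * b ^ 2 := by
  have hadd : |a + b| ≤ (c + 2) * b :=
    calc |a + b| = |(a - b) + 2 * b| := by ring_nf
      _ ≤ |a - b| + |2 * b| := abs_add_le _ _
      _ ≤ (c + 2) * b := by rw [abs_of_nonneg (by positivity : (0 : ℝ) ≤ 2 * b)]; linarith
  calc |a ^ 2 - b ^ 2| = |a - b| * |a + b| := by rw [← abs_mul]; ring_nf
    _ ≤ (c * b) * ((c + 2) * b) := mul_le_mul h hadd (abs_nonneg _) ((abs_nonneg _).trans h)
    _ = c * (c + 2) * b ^ 2 := by ring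

lemma abs_sq_sub_sq_le_of_le_four_mul {ψ₀ ε d r : ℝ} (hψ₁ : 1 ≤ ψ₀) (hψ₂ : ψ₀ ≤ 2)
    (hr₀ : 0 ≤ r) (hr : r ≤ 4 * ε) (hd : |d - r| ≤ (ψ₀ - 1) * r) :
    |d ^ 2 - r ^ 2| ≤ 4 ^ 3 * (ψ₀ - 1) * ε ^ 2 := by
  have : 0 ≤ ψ₀ - 1 := by linarith
  calc |d ^ 2 - r ^ 2| ≤ (ψ₀ - 1) * (ψ₀ - 1 + 2) * r ^ 2 := abs_sq_sub_sq_le_of_abs_sub_le hr₀ hd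
    _ ≤ (ψ₀ - 1) * 4 * (4 * ε) ^ 2 := by gcongr; linarith
    _ = 4 ^ 3 * (ψ₀ - 1) * ε ^ 2 := by ring

section WeightedSums

variable {ι : Type*} (s : Finset ι) {w : ι → ℝ}

lemma abs_sum_mul_sub_sum_mul_le {a b : ι → ℝ} {α : ℝ} (hw₀ : ∀ i ∈ s, 0 ≤ w i)
    (hw₁ : ∑ i ∈ s, w i = 1) (h : ∀ i ∈ s, |a i - b i| ≤ α) :
    |∑ i ∈ s, w i * a i - ∑ i ∈ s, w i * b i| ≤ α :=
  calc |∑ i ∈ s, w i * a i - ∑ i ∈ s, w i * b i| = |∑ i ∈ s, w i * (a i - b i)| := by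
        simp only [mul_sub, sum_sub_distrib]
    _ ≤ ∑ i ∈ s, |w i * (a i - b i)| := abs_sum_le_sum_abs _ _
    _ ≤ ∑ i ∈ s, w i * α := sum_le_sum fun i hi => by
        rw [abs_mul, abs_of_nonneg (hw₀ i hi)]; exact mul_le_mul_of_nonneg_left (h i hi) (hw₀ i hi)
    _ = α := by rw [← sum_mul, hw₁, one_mul]

variable {E : Type*} [NormedAddCommGroup E] [InnerProductSpace ℝ E]

lemma sum_mul_norm_sub_sq_eq (hw : ∑ i ∈ s, w i = 1) (p : ι → E) (x : E) :
    ∑ i ∈ s, w i * ‖x - p i‖ ^ 2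
      = ‖x - ∑ i ∈ s, w i • p i‖ ^ 2 + ∑ i ∈ s, w i * ‖∑ j ∈ s, w j • p j - p i‖ ^ 2 := by
  set c := ∑ i ∈ s, w i • p i with hc
  have hcross : ∑ i ∈ s, w i * inner ℝ (x - c) (c - p i) = 0 := by
    simp_rw [← real_inner_smul_right, ← inner_sum, smul_sub, sum_sub_distrib, ← sum_smul, hw,
      one_smul, ← hc, sub_self, inner_zero_right]
  calc ∑ i ∈ s, w i * ‖x - p i‖ ^ 2
      = ∑ i ∈ s, w i * (‖x - c‖ ^ 2 + 2 * inner ℝ (x - c) (c - p i) + ‖c - p i‖ ^ 2) := by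
        simp_rw [← norm_add_sq_real, sub_add_sub_cancel]
    _ = ‖x - c‖ ^ 2 + ∑ i ∈ s, w i * ‖c - p i‖ ^ 2 := by
        simp only [mul_add, sum_add_distrib, ← sum_mul, hw, mul_left_comm _ (2 : ℝ), ← mul_sum,
          hcross]
        ring

end WeightedSums

theorem stmt16_general (n : ℕ) (U : Set (EuclideanSpace ℝ (Fin n)))
    (hUc : Convex ℝ U)
    (dg : EuclideanSpace ℝ (Fin n) → EuclideanSpace ℝ (Fin n) → ℝ)
    (ψ₀ ε : ℝ) (hψ₁ : 1 ≤ ψ₀) (hψ₂ : ψ₀ ≤ 2) (hε : 0 ≤ ε)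
    (hd : ∀ x ∈ U, ∀ y ∈ U, |dg x y - ‖x - y‖| ≤ (ψ₀ - 1) * ‖x - y‖)
    (p : Fin (n + 1) → EuclideanSpace ℝ (Fin n)) (hp : ∀ i, p i ∈ U)
    (lam : Fin (n + 1) → ℝ) (hlam : ∀ i, 0 ≤ lam i) (hsum : ∑ i, lam i = 1)
    (hpp : ∀ i j, dist (p i) (p j) ≤ 4 * ε)
    (xt : EuclideanSpace ℝ (Fin n)) (hxtU : xt ∈ U)
    (hmin : ∀ y ∈ U, ∑ i, lam i * dg xt (p i) ^ 2 ≤ ∑ i, lam i * dg y (p i) ^ 2)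
    (hxtp : ∀ i, ‖xt - p i‖ ≤ 4 * ε) :
    ‖xt - ∑ i, lam i • p i‖ ≤ Real.sqrt (2 * 4 ^ 3 * (ψ₀ - 1)) * ε := by
  set xe := ∑ i, lam i • p i
  have hxeU : xe ∈ U := hUc.sum_mem (fun i _ => hlam i) hsum fun i _ => hp i
  have hxep (i) : ‖xe - p i‖ ≤ 4 * ε := by
    have := (convex_closedBall (p i) (4 * ε)).sum_mem (fun j _ => hlam j) hsum fun j _ => by
      rw [Metric.mem_closedBall, dist_comm]; exact hpp i j
    rwa [Metric.mem_closedBall, dist_eq_norm] at this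
  have henergy (x) (hx : x ∈ U) (hxp : ∀ i, ‖x - p i‖ ≤ 4 * ε) :
      |∑ i, lam i * dg x (p i) ^ 2 - ∑ i, lam i * ‖x - p i‖ ^ 2| ≤ 4 ^ 3 * (ψ₀ - 1) * ε ^ 2 :=
    abs_sum_mul_sub_sum_mul_le _ (fun i _ => hlam i) hsum fun i _ =>
      abs_sq_sub_sq_le_of_le_four_mul hψ₁ hψ₂ (norm_nonneg _) (hxp i) (hd x hx (p i) (hp i))
  have hsq : ‖xt - xe‖ ^ 2 ≤ 2 * 4 ^ 3 * (ψ₀ - 1) * ε ^ 2 := by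
    have hparallel := sum_mul_norm_sub_sq_eq univ hsum p xt
    have ht := abs_le.mp (henergy xt hxtU hxtp)
    have he := abs_le.mp (henergy xe hxeU hxep)
    linarith [hmin xe hxeU]
  calc ‖xt - xe‖ ≤ Real.sqrt (2 * 4 ^ 3 * (ψ₀ - 1) * ε ^ 2) := by
        simpa using Real.abs_le_sqrt hsq
    _ = Real.sqrt (2 * 4 ^ 3 * (ψ₀ - 1)) * ε := by
        rw [Real.sqrt_mul' _ (sq_nonneg ε), Real.sqrt_sq hε]

/-- the Riemannian center of mass is close to the Euclidean barycenter.  If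
`d_g(x,y) = ‖x−y‖ + δd(x,y)` with `|δd(x,y)| ≤ (ψ₀−1)‖x−y‖` on a convex open `U`,
`1 ≤ ψ₀ ≤ 2`, and `x̃` minimizes the energy `Σ λᵢ d_g(·,pᵢ)²` over `U` with all relevant
distances at most `4ε`, then `‖x̃ − Σ λᵢ pᵢ‖ ≤ √(2·4³·(ψ₀−1))·ε`. -/
theorem stmt16 (n : ℕ) (U : Set (EuclideanSpace ℝ (Fin n)))
    (hUc : Convex ℝ U) (hUo : IsOpen U)
    (dg : EuclideanSpace ℝ (Fin n) → EuclideanSpace ℝ (Fin n) → ℝ)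
    (ψ₀ ε : ℝ) (hψ₁ : 1 ≤ ψ₀) (hψ₂ : ψ₀ ≤ 2) (hε : 0 ≤ ε)
    (hd : ∀ x ∈ U, ∀ y ∈ U, |dg x y - ‖x - y‖| ≤ (ψ₀ - 1) * ‖x - y‖)
    (p : Fin (n + 1) → EuclideanSpace ℝ (Fin n)) (hp : ∀ i, p i ∈ U)
    (lam : Fin (n + 1) → ℝ) (hlam : ∀ i, 0 ≤ lam i) (hsum : ∑ i, lam i = 1)
    (hpp : ∀ i j, dist (p i) (p j) ≤ 4 * ε)
    (xt : EuclideanSpace ℝ (Fin n)) (hxtU : xt ∈ U)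
    (hmin : ∀ y ∈ U, ∑ i, lam i * dg xt (p i) ^ 2 ≤ ∑ i, lam i * dg y (p i) ^ 2)
    (hxtp : ∀ i, ‖xt - p i‖ ≤ 4 * ε) :
    ‖xt - ∑ i, lam i • p i‖ ≤ Real.sqrt (2 * 4 ^ 3 * (ψ₀ - 1)) * ε :=
  stmt16_general n U hUc dg ψ₀ ε hψ₁ hψ₂ hε hd p hp lam hlam hsum hpp xt hxtU hmin hxtp
end
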